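/- For every p ∈ ℝ, the super density matrix ϱ, defined as the outer product with (i,j) entry (ψ p 1 0)ᵢ * (ψ† p 1 0)ⱼ, equals the matrix with rows (1 + p²•E, 0, p•η'), (0, 0, 0), (p•η, 0, p²•E), and its supertrace ϱ₀₀ + ϱ₁₁ - ϱ₂₂ equals 1. -/

import Mathlib

/-! Since `η² = η'² = 0` and `η η' = -η' η`, the even element `E = η η'` is nilpotent of order two
and is killed by `η` on the left and by `η'` on the right. Hence the normalisation factors
`1 + (p²/2) E` square to `1 + p² E` and disappear against the odd entries, the odd–odd entry is
`p² E`, and the two `p² E` terms cancel in the supertrace. -/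

noncomputable section

abbrev Λ : Type := ExteriorAlgebra ℂ (Fin 2 → ℂ)

def η : Λ := ExteriorAlgebra.ι ℂ (Pi.single 0 1)

def η' : Λ := ExteriorAlgebra.ι ℂ (Pi.single 1 1)

def E : Λ := η * η'

/-- The superqubit ket `ψ p α β`. -/
def ψ (p : ℝ) (α β : ℂ) : Fin 3 → Λ :=
  ![α • (1 + ((p ^ 2 / 2 : ℝ) : ℂ) • E),
    β • (1 + ((p ^ 2 / 2 : ℝ) : ℂ) • E),
    (p : ℂ) • (α • η - β • η')]

/-- The superqubit bra `ψ† p α β`. -/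
def ψbra (p : ℝ) (α β : ℂ) : Fin 3 → Λ :=
  ![(starRingEnd ℂ α) • (1 + ((p ^ 2 / 2 : ℝ) : ℂ) • E),
    (starRingEnd ℂ β) • (1 + ((p ^ 2 / 2 : ℝ) : ℂ) • E),
    (p : ℂ) • ((starRingEnd ℂ α) • η' + (starRingEnd ℂ β) • η)]

/-- The super density matrix `ϱ = |ψ⟩⟨ψ|` for `α = 1`, `β = 0`. -/
def ϱ (p : ℝ) : Matrix (Fin 3) (Fin 3) Λ :=
  Matrix.of fun i j => ψ p 1 0 i * ψbra p 1 0 j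

lemma η_mul_self : η * η = 0 := ExteriorAlgebra.ι_sq_zero _

lemma η'_mul_self : η' * η' = 0 := ExteriorAlgebra.ι_sq_zero _

lemma η'_mul_η : η' * η = -E :=
  eq_neg_of_add_eq_zero_right (ExteriorAlgebra.ι_add_mul_swap _ _)

lemma η_mul_E : η * E = 0 := by rw [E, ← mul_assoc, η_mul_self, zero_mul]

lemma E_mul_η' : E * η' = 0 := by rw [E, mul_assoc, η'_mul_self, mul_zero]

lemma E_mul_E : E * E = 0 := by
  have hη'E : η' * E = 0 := by rw [E, ← mul_assoc, η'_mul_η, neg_mul, E_mul_η', neg_zero]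
  change η * η' * E = 0
  rw [mul_assoc, hη'E, mul_zero]

lemma smul_η_mul_smul_η' (a b : ℂ) : (a • η) * (b • η') = (a * b) • E :=
  smul_mul_smul_comm a η b η'

lemma one_add_smul_mul_one_add_smul {R A : Type*} [CommSemiring R] [Semiring A] [Algebra R A]
    {x : A} (hx : x * x = 0) (a b : R) :
    (1 + a • x) * (1 + b • x) = 1 + (a + b) • x := by
  simp only [mul_add, add_mul, one_mul, mul_one, smul_mul_smul_comm, hx, smul_zero, add_smul]
  abel

lemma ψ_one_zero (p : ℝ) : ψ p 1 0 = ![1 + ((p ^ 2 / 2 : ℝ) : ℂ) • E, 0, (p : ℂ) • η] := by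
  simp [ψ]

lemma ψbra_one_zero (p : ℝ) : ψbra p 1 0 = ![1 + ((p ^ 2 / 2 : ℝ) : ℂ) • E, 0, (p : ℂ) • η'] := by
  simp [ψbra]

section Entries

variable (p : ℝ)

lemma ϱ_zero_zero : ϱ p 0 0 = 1 + ((p ^ 2 : ℝ) : ℂ) • E := by
  simp only [ϱ, Matrix.of_apply, ψ_one_zero, ψbra_one_zero, Matrix.cons_val_zero,
    one_add_smul_mul_one_add_smul E_mul_E]
  congr 2
  push_cast
  ring

lemma ϱ_zero_two : ϱ p 0 2 = (p : ℂ) • η' := by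
  simp [ϱ, ψ_one_zero, ψbra_one_zero, add_mul, E_mul_η']

lemma ϱ_two_zero : ϱ p 2 0 = (p : ℂ) • η := by
  simp [ϱ, ψ_one_zero, ψbra_one_zero, mul_add, η_mul_E]

lemma ϱ_two_two : ϱ p 2 2 = ((p ^ 2 : ℝ) : ℂ) • E := by
  rw [ϱ, Matrix.of_apply, ψ_one_zero, ψbra_one_zero]
  change (p : ℂ) • η * ((p : ℂ) • η') = _
  rw [smul_η_mul_smul_η', Complex.ofReal_pow, sq]

lemma ϱ_one_left (j : Fin 3) : ϱ p 1 j = 0 := by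
  simp [ϱ, ψ_one_zero]

lemma ϱ_one_right (i : Fin 3) : ϱ p i 1 = 0 := by
  simp [ϱ, ψbra_one_zero]

end Entries

theorem super_density_matrix (p : ℝ) :
    ϱ p =
      !![1 + ((p ^ 2 : ℝ) : ℂ) • E, 0, (p : ℂ) • η';
         0, 0, 0;
         (p : ℂ) • η, 0, ((p ^ 2 : ℝ) : ℂ) • E] ∧
    ϱ p 0 0 + ϱ p 1 1 - ϱ p 2 2 = 1 := by
  constructor
  · ext i j
    fin_cases i <;> fin_cases j <;>
      simp [ϱ_zero_zero, ϱ_zero_two, ϱ_two_zero, ϱ_two_two, ϱ_one_left, ϱ_one_right]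
  · rw [ϱ_zero_zero, ϱ_one_left, ϱ_two_two, add_zero, add_sub_cancel_right]
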